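/- arXiv:1302.5793 — 5 statements merged into one kernel-verified Lean document; each statement's English description precedes it below -/
import Mathlib

section
/- For n ≥ 3, the Wielandt digraph W_n (with vertices 1,…,n and edges (i, i+1) for 1 ≤ i ≤ n-1, (n,1) and (n,2)) is primitive and its exponent equals (n-1)² + 1 = n² - 2n + 2. -/
/-- `PathLen E t u v` : there is a directed path of length exactly `t` from `u` to `v`. -/
def PathLen {V : Type*} (E : V → V → Prop) : ℕ → V → V → Prop
  | 0, u, v => u = v
  | t+1, u, v => ∃ x, E u x ∧ PathLen E t x v

/-- The Wielandt digraph `W_n` on vertices `0,…,n-1` (paper's `1,…,n` shifted by one):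
edges `i → i+1` for `i < n-1`, plus `n-1 → 0` and `n-1 → 1`. -/
def wielandtEdge (n : ℕ) (u v : ZMod n) : Prop :=
  v = u + 1 ∨ (u.val = n - 1 ∧ v = 1)

lemma pathLen_add {V : Type*} {E : V → V → Prop} {s t : ℕ} {u w v : V}
    (h1 : PathLen E s u w) (h2 : PathLen E t w v) : PathLen E (s + t) u v := by
  induction s generalizing u with
  | zero => simp only [PathLen] at h1; subst h1; simpa using h2
  | succ s ih =>
    obtain ⟨x, he, hp⟩ := h1
    rw [Nat.succ_add]
    exact ⟨x, he, ih hp⟩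

lemma straight (n : ℕ) : ∀ (t : ℕ) (u : ZMod n), PathLen (wielandtEdge n) t u (u + t)
  | 0, u => by simp [PathLen]
  | t+1, u => by
    refine ⟨u+1, Or.inl rfl, ?_⟩
    have := straight n t (u+1)
    have h : u + ((t:ℕ)+1 : ℕ) = u + 1 + (t : ZMod n) := by push_cast; ring
    rw [h]
    exact this

lemma straight' (n : ℕ) {t : ℕ} {u v : ZMod n} (h : v = u + (t : ZMod n)) :
    PathLen (wielandtEdge n) t u v := h ▸ straight n t u

section
variable {n : ℕ} (hn : 3 ≤ n)
include hn

lemma neZero' : NeZero n := ⟨by omega⟩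

lemma neg_one_val : (-1 : ZMod n).val = n - 1 := by
  haveI := neZero' hn
  have : (-1 : ZMod n) = ((n-1 : ℕ) : ZMod n) := by
    have : ((n : ℕ) : ZMod n) = 0 := ZMod.natCast_self n
    push_cast [Nat.cast_sub (by omega : 1 ≤ n)]
    rw [this]; ring
  rw [this, ZMod.val_natCast, Nat.mod_eq_of_lt (by omega)]

lemma shortcut : wielandtEdge n (-1) 1 := Or.inr ⟨neg_one_val hn, rfl⟩

lemma shortcut_path : PathLen (wielandtEdge n) 1 (-1 : ZMod n) 1 :=
  ⟨1, shortcut hn, rfl⟩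

lemma loop : PathLen (wielandtEdge n) (n-1) (-1 : ZMod n) (-1) := by
  have h1 : PathLen (wielandtEdge n) (1 + (n-2)) (-1 : ZMod n) (1 + ((n-2 : ℕ) : ZMod n)) :=
    pathLen_add (shortcut_path hn) (straight n (n-2) 1)
  have h2 : (1 + ((n-2 : ℕ) : ZMod n)) = -1 := by
    push_cast [Nat.cast_sub (by omega : 2 ≤ n)]
    rw [ZMod.natCast_self]; ring
  have h3 : 1 + (n-2) = n-1 := by omega
  rwa [h2, h3] at h1

lemma loops : ∀ j : ℕ, PathLen (wielandtEdge n) (j*(n-1)) (-1 : ZMod n) (-1)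
  | 0 => by simp [PathLen]
  | j+1 => by
    have := pathLen_add (loop hn) (loops j)
    rwa [show n-1 + j*(n-1) = (j+1)*(n-1) by ring] at this

lemma val_cast (u : ZMod n) : ((u.val : ℕ) : ZMod n) = u := by
  haveI := neZero' hn
  simp [ZMod.natCast_val, ZMod.cast_id]

end

section
variable {n : ℕ} (hn : 3 ≤ n)
include hn

lemma eq_neg_one_of_val {u : ZMod n} (h : u.val = n - 1) : u = -1 := by
  haveI := neZero' hn
  have := val_cast hn u
  rw [h] at this
  rw [← this]
  push_cast [Nat.cast_sub (by omega : 1 ≤ n)]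
  rw [ZMod.natCast_self]; ring

lemma neg_two_val : (-2 : ZMod n).val = n - 2 := by
  haveI := neZero' hn
  have h : (-2 : ZMod n) = ((n-2 : ℕ) : ZMod n) := by
    push_cast [Nat.cast_sub (by omega : 2 ≤ n)]
    rw [ZMod.natCast_self]; ring
  rw [h, ZMod.val_natCast, Nat.mod_eq_of_lt (by omega)]

lemma val_succ_le (y : ZMod n) : (y + 1).val ≤ y.val + 1 := by
  haveI := neZero' hn
  have h1 : (1 : ZMod n).val = 1 := ZMod.val_one_eq_one_mod n ▸ Nat.mod_eq_of_lt (by omega)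
  calc (y + 1).val = (y.val + (1 : ZMod n).val) % n := ZMod.val_add y 1
    _ ≤ y.val + (1 : ZMod n).val := Nat.mod_le _ _
    _ = y.val + 1 := by rw [h1]

lemma walk_inv : ∀ (t : ℕ) (u v : ZMod n), PathLen (wielandtEdge n) t u v →
    ∃ k : ℕ, v = u + (t : ZMod n) + (k : ZMod n) ∧
      (1 ≤ k → ((-1 : ZMod n) - u).val + (k-1)*(n-1) + 1 + (v-1).val ≤ t) := by
  haveI := neZero' hn
  intro t
  induction t with
  | zero =>
    intro u v h
    exact ⟨0, by simp only [PathLen] at h; simp [h], by omega⟩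
  | succ t ih =>
    intro u v h
    obtain ⟨x, he, hp⟩ := h
    obtain ⟨k, hk, hlen⟩ := ih x v hp
    rcases he with he | ⟨hu, hx⟩
    · -- x = u + 1
      refine ⟨k, ?_, ?_⟩
      · rw [hk, he]; push_cast; ring
      · intro hk1
        have h1 := hlen hk1
        have h2 : ((-1 : ZMod n) - u).val ≤ ((-1 : ZMod n) - x).val + 1 := by
          have : (-1 : ZMod n) - u = ((-1) - x) + 1 := by rw [he]; ring
          rw [this]; exact val_succ_le hn _
        omega
    · -- shortcut: u.val = n-1, x = 1
      have hu1 : u = -1 := eq_neg_one_of_val hn hu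
      subst hx
      refine ⟨k + 1, ?_, ?_⟩
      · rw [hk, hu1]; push_cast; ring
      · intro _
        have ha : ((-1 : ZMod n) - u).val = 0 := by rw [hu1]; simp
        rcases Nat.eq_zero_or_pos k with hk0 | hk1
        · subst hk0
          have hv : v - 1 = ((t : ℕ) : ZMod n) := by rw [hk]; push_cast; ring
          have : (v - 1).val ≤ t := by rw [hv, ZMod.val_natCast]; exact Nat.mod_le _ _
          omega
        · have h1 := hlen hk1
          have h2 : ((-1 : ZMod n) - 1).val = n - 2 := by
            rw [show (-1 : ZMod n) - 1 = -2 by ring]; exact neg_two_val hn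
          rw [h2] at h1
          have : (k+1-1)*(n-1) = (k-1)*(n-1) + (n-1) := by
            have hkk : k+1-1 = (k-1)+1 := by omega
            rw [hkk]; ring
          omega

end

section
variable {n : ℕ} (hn : 3 ≤ n)
include hn

lemma upper (u v : ZMod n) : PathLen (wielandtEdge n) ((n-1)^2+1) u v := by
  haveI := neZero' hn
  have hncast : ((n : ℕ) : ZMod n) = 0 := ZMod.natCast_self n
  have ht0cast : (((n-1)^2+1 : ℕ) : ZMod n) = 2 := by
    push_cast [Nat.cast_sub (by omega : 1 ≤ n)]
    rw [hncast]; ring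
  rcases Nat.eq_zero_or_pos (v - u - 2).val with hk0 | hk1
  · -- v = u + 2 : straight walk
    have hv : v = u + (((n-1)^2+1 : ℕ) : ZMod n) := by
      have h := val_cast hn (v - u - 2)
      rw [hk0] at h
      rw [ht0cast]
      have : v - u - 2 = 0 := by rw [← h]; simp
      linear_combination this
    exact straight' n hv
  · obtain ⟨k₀, hk₀def⟩ : ∃ k, (v - u - 2).val = k := ⟨_, rfl⟩
    rw [hk₀def] at hk1
    set a := ((-1 : ZMod n) - u).val with hadef
    set b := (v - 1).val with hbdef
    have hkc : ((k₀ : ℕ) : ZMod n) = v - u - 2 := hk₀def ▸ val_cast hn _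
    have hac : ((a : ℕ) : ZMod n) = -1 - u := val_cast hn _
    have hbc : ((b : ℕ) : ZMod n) = v - 1 := val_cast hn _
    have hklt : k₀ < n := hk₀def ▸ ZMod.val_lt _
    have halt : a < n := ZMod.val_lt _
    have hblt : b < n := ZMod.val_lt _
    -- a + b ≡ k₀ mod n
    have habc : ((a + b : ℕ) : ZMod n) = ((k₀ : ℕ) : ZMod n) := by
      push_cast
      rw [hac, hbc, hkc]; ring
    have habmod : a + b = k₀ ∨ a + b = k₀ + n := by
      have h := (ZMod.natCast_eq_natCast_iff _ _ _).mp habc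
      have h2 : (a + b) % n = k₀ := by
        rw [Nat.ModEq] at h
        rw [h, Nat.mod_eq_of_lt hklt]
      by_cases hab : a + b < n
      · left; rw [Nat.mod_eq_of_lt hab] at h2; exact h2
      · right
        push_neg at hab
        rw [Nat.mod_eq_sub_mod hab, Nat.mod_eq_of_lt (by omega)] at h2
        omega
    -- L ≤ t₀
    obtain ⟨m, rfl⟩ : ∃ m, n = m + 3 := ⟨n - 3, by omega⟩
    obtain ⟨j, rfl⟩ : ∃ j, k₀ = j + 1 := ⟨k₀ - 1, by omega⟩
    have hm : ((m : ℕ) : ZMod (m+3)) = -3 := by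
      have h := hncast
      push_cast at h
      linear_combination h
    have hL : a + (j+1-1)*(m+3-1) + 1 + b ≤ (m+3-1)^2+1 := by
      simp only [show j+1-1 = j from rfl, show m+3-1 = m+2 from rfl]
      rcases habmod with h | h
      · nlinarith [h, (by omega : j ≤ m + 1)]
      · nlinarith [h, (by omega : j ≤ m), (by omega : a + b ≤ 2*m + 4)]
    -- L ≡ t₀ mod n
    have hj : ((j : ℕ) : ZMod (m+3)) = v - u - 2 - 1 := by
      rw [← hkc]; push_cast; ring
    have hLc : ((a + (j+1-1)*(m+3-1) + 1 + b : ℕ) : ZMod (m+3)) = 2 := by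
      push_cast
      rw [hac, hbc, hj, hm]
      ring
    have hdvd : (m+3) ∣ ((m+3-1)^2+1) - (a + (j+1-1)*(m+3-1) + 1 + b) := by
      have h := (ZMod.natCast_eq_natCast_iff _ _ _).mp (ht0cast.trans hLc.symm)
      exact (Nat.modEq_iff_dvd' hL).mp h.symm
    obtain ⟨c, hc⟩ := hdvd
    have htot : ((m+3)*c + a) + ((j+1-1)*(m+3-1)) + (1 + b) = (m+3-1)^2+1 := by omega
    rw [← htot]
    refine pathLen_add (pathLen_add ?_ (loops hn (j+1-1))) (pathLen_add (shortcut_path hn) ?_)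
    · refine straight' _ ?_
      push_cast
      rw [hac, hm]; ring
    · refine straight' _ ?_
      rw [hbc]; ring

end


/-- For `n ≥ 3`, the Wielandt digraph `W_n` is primitive (strongly connected and the
gcd of its directed cycle lengths is 1) and its exponent is exactly `(n-1)² + 1`. -/
theorem stmt_4 (n : ℕ) (hn : 3 ≤ n) :
    ((∀ u v : ZMod n, ∃ t, PathLen (wielandtEdge n) t u v) ∧
      (∀ d : ℕ, (∀ (t : ℕ) (v : ZMod n), 0 < t → PathLen (wielandtEdge n) t v v → d ∣ t) →
        d = 1)) ∧
    IsLeast {t : ℕ | ∀ u v : ZMod n, PathLen (wielandtEdge n) t u v} ((n - 1) ^ 2 + 1) := by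
  haveI := neZero' hn
  refine ⟨⟨?_, ?_⟩, ?_, ?_⟩
  · -- strong connectivity
    intro u v
    exact ⟨(v - u).val, straight' n (by rw [val_cast hn]; ring)⟩
  · -- gcd of cycle lengths is 1
    intro d hd
    have h1 : d ∣ n := by
      refine hd n 0 (by omega) ?_
      have h := straight n n 0
      rwa [show ((0:ZMod n) + ((n:ℕ) : ZMod n)) = 0 by rw [ZMod.natCast_self]; ring] at h
    have h2 : d ∣ (n-1) := hd (n-1) (-1) (by omega) (loop hn)
    have h3 := Nat.dvd_sub h1 h2
    rw [show n - (n-1) = 1 by omega] at h3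
    exact Nat.dvd_one.mp h3
  · -- upper bound: membership
    intro u v
    exact upper hn u v
  · -- lower bound
    intro t ht
    obtain ⟨k, hk, hlen⟩ := walk_inv hn t 0 ((t : ZMod n) - 1) (ht 0 _)
    have hkc : ((k : ℕ) : ZMod n) = -1 := by linear_combination -hk
    have hk1 : 1 ≤ k := by
      rcases Nat.eq_zero_or_pos k with h0 | h0
      · exfalso
        rw [h0] at hkc
        have := congrArg ZMod.val hkc
        rw [neg_one_val hn] at this
        simp at this
        omega
      · exact h0
    have hkn : n - 1 ≤ k := by
      have hnc : (((n-1 : ℕ)) : ZMod n) = -1 := by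
        push_cast [Nat.cast_sub (by omega : 1 ≤ n)]
        rw [ZMod.natCast_self]; ring
      have h := (ZMod.natCast_eq_natCast_iff _ _ _).mp (hkc.trans hnc.symm)
      have h2 : k % n = n - 1 := by
        rw [Nat.ModEq] at h
        rw [h, Nat.mod_eq_of_lt (by omega : n - 1 < n)]
      have := Nat.mod_le k n
      omega
    have h2 := hlen hk1
    have ha : ((-1 : ZMod n) - 0).val = n - 1 := by rw [sub_zero]; exact neg_one_val hn
    rw [ha] at h2
    obtain ⟨m, rfl⟩ : ∃ m, n = m + 3 := ⟨n - 3, by omega⟩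
    have e1 : m + 3 - 1 = m + 2 := by omega
    rw [e1] at h2 ⊢
    have e2 : m + 1 ≤ k - 1 := by omega
    have e3 : (m+1)*(m+2) ≤ (k-1)*(m+2) := Nat.mul_le_mul_right _ e2
    nlinarith [h2, e3]
end

section
/- For n ≥ 3, the Černý automaton C_n is synchronizing and the word (a b^{n-1})^{n-2} a, of length (n-1)², is a reset word for C_n. -/
/-- The state reached from `q` by reading the word `w`. -/
def run {Q A : Type*} (δ : Q → A → Q) (q : Q) (w : List A) : Q := w.foldl δ q

/-- The Černý automaton `C_n` on states `0,…,n-1` (paper's `1,…,n` shifted by one);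
`true` is the letter `a` (fixes all states except the last, which goes to `0`),
`false` is the letter `b` (cyclic shift `i ↦ i+1 (mod n)`). -/
def cerny (n : ℕ) (q : ZMod n) : Bool → ZMod n
  | true => if q.val = n - 1 then 0 else q
  | false => q + 1

lemma run_append {Q A : Type*} (δ : Q → A → Q) (q : Q) (u v : List A) :
    run δ q (u ++ v) = run δ (run δ q u) v := List.foldl_append ..

lemma run_replicate_false (n m : ℕ) (q : ZMod n) :
    run (cerny n) q (List.replicate m false) = q + m := by
  induction m generalizing q with
  | zero => simp [run]
  | succ m ih =>
      rw [List.replicate_succ]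
      show run (cerny n) (q + 1) (List.replicate m false) = q + (m + 1 : ℕ)
      rw [ih]; push_cast; ring

lemma run_block (n : ℕ) (q : ZMod n) :
    run (cerny n) q (true :: List.replicate (n - 1) false)
      = (if q.val = n - 1 then 0 else q) + ((n - 1 : ℕ) : ZMod n) := by
  show run (cerny n) (cerny n q true) (List.replicate (n - 1) false) = _
  rw [run_replicate_false]; rfl

lemma run_blocks (n : ℕ) (hn : 3 ≤ n) (k : ℕ) :
    ∀ v : ℕ, v < n →
      run (cerny n) (v : ZMod n)
          ((List.replicate k (true :: List.replicate (n - 1) false)).flatten)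
        = if v < k ∨ v = n - 1 then ((n - 1 : ℕ) : ZMod n) else ((v - k : ℕ) : ZMod n) := by
  haveI : NeZero n := ⟨by omega⟩
  induction k with
  | zero =>
      intro v hv
      simp only [List.replicate_zero, List.flatten_nil, Nat.not_lt_zero, false_or, Nat.sub_zero]
      show (v : ZMod n) = _
      split_ifs with h
      · rw [h]
      · rfl
  | succ k ih =>
      intro v hv
      rw [List.replicate_succ, List.flatten_cons, run_append, run_block]
      rw [ZMod.val_natCast_of_lt hv]
      by_cases hv1 : v = n - 1
      · rw [if_pos hv1]
        have : ((0 : ZMod n) + ((n - 1 : ℕ) : ZMod n)) = ((n - 1 : ℕ) : ZMod n) := by ring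
        rw [this, ih (n - 1) (by omega)]
        simp [hv1]
      · rw [if_neg hv1]
        by_cases hv0 : v = 0
        · subst hv0
          have : ((0 : ℕ) : ZMod n) + ((n - 1 : ℕ) : ZMod n) = ((n - 1 : ℕ) : ZMod n) := by
            push_cast; ring
          rw [this, ih (n - 1) (by omega)]
          simp
        · have hcast : ((v : ℕ) : ZMod n) + ((n - 1 : ℕ) : ZMod n) = ((v - 1 : ℕ) : ZMod n) := by
            have h1 : v + (n - 1) = (v - 1) + n := by omega
            have := congrArg (fun m : ℕ => (m : ZMod n)) h1
            push_cast at this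
            simpa [ZMod.natCast_self] using this
          rw [hcast, ih (v - 1) (by omega)]
          have hne : ¬ (v - 1 = n - 1) := by omega
          by_cases hlt : v - 1 < k
          · rw [if_pos (Or.inl hlt), if_pos (Or.inl (by omega))]
          · rw [if_neg (by omega), if_neg (by omega)]
            congr 1
            omega

/-- For `n ≥ 3`, the word `(a b^{n-1})^{n-2} a`, of length `(n-1)²`,
is a reset word for the Černý automaton `C_n` (in particular `C_n` is synchronizing). -/
theorem stmt_5 (n : ℕ) (hn : 3 ≤ n) :
    let w : List Bool := (List.replicate (n - 2) (true :: List.replicate (n - 1) false)).flatten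
      ++ [true]
    w.length = (n - 1) ^ 2 ∧ ∃ p : ZMod n, ∀ q, run (cerny n) q w = p := by
  haveI : NeZero n := ⟨by omega⟩
  intro w
  constructor
  · show _ = _
    simp only [w, List.length_append, List.length_flatten, List.map_replicate,
      List.length_cons, List.length_replicate, List.sum_replicate, smul_eq_mul,
      List.length_singleton]
    obtain ⟨m, rfl⟩ : ∃ m, n = m + 3 := ⟨n - 3, by omega⟩
    have h2 : m + 3 - 2 = m + 1 := rfl
    have h1 : m + 3 - 1 = m + 2 := rfl
    rw [h1, h2]
    simp only [List.length_nil]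
    ring
  · refine ⟨0, fun q => ?_⟩
    have hq : ((q.val : ℕ) : ZMod n) = q := ZMod.natCast_rightInverse q
    have hv : q.val < n := q.val_lt
    rw [show w = (List.replicate (n - 2) (true :: List.replicate (n - 1) false)).flatten
      ++ [true] from rfl, run_append]
    rw [← hq, run_blocks n hn (n - 2) q.val hv]
    by_cases h : q.val < n - 2 ∨ q.val = n - 1
    · rw [if_pos h]
      have hval : ((n - 1 : ℕ) : ZMod n).val = n - 1 := ZMod.val_natCast_of_lt (by omega)
      simp [run, cerny, hval]
    · rw [if_neg h]
      have : q.val - (n - 2) = 0 := by omega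
      rw [this]
      show run (cerny n) ((0 : ℕ) : ZMod n) [true] = 0
      simp [run, cerny]
end

section
/- Let 𝒜 = (Q, {a,b}, δ) be a synchronizing automaton with n states and reset threshold t, in which a fixes all states except exactly one and b acts as a permutation of Q. Let ℬ = (Q, {b,c}, ζ) be the automaton where ζ(q,b) = δ(q,b) and ζ(q,c) = δ(q,ab). Then ℬ is synchronizing and its reset threshold is at most t - n + 2. -/
namespace Stmt8Aux

def trans : List Bool → List Bool
  | [] => []
  | false :: l => false :: trans l
  | [true] => []
  | true :: true :: l => trans (true :: l)
  | true :: false :: l => true :: trans l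

theorem trans_length (l : List Bool) : (trans l).length + l.count true ≤ l.length := by
  induction l using trans.induct <;> simp_all [trans, List.count_cons] <;> omega

theorem trans_run {Q : Type*} (δ : Q → Bool → Q)
    (hidem : ∀ q, δ (δ q true) true = δ q true)
    (ζ : Q → Bool → Q)
    (hζ : ∀ q x, ζ q x = if x then δ (δ q true) false else δ q false)
    (l : List Bool) (hl : l.getLast? ≠ some true) : ∀ q : Q,
    run ζ q (trans l) = run δ q l := by
  induction l using trans.induct with
  | case1 => intro q; rfl
  | case2 l ih =>
      intro q
      show run ζ (ζ q false) (trans l) = run δ (δ q false) l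
      rcases l with _ | ⟨x, l⟩
      · simp [run, trans, hζ]
      · rw [ih (by rwa [List.getLast?_cons_cons] at hl)]
        simp [run, hζ]
  | case3 => simp at hl
  | case4 l ih =>
      intro q
      have h1 : run δ q (true :: true :: l) = run δ q (true :: l) := by
        show run δ (δ (δ q true) true) l = run δ (δ q true) l
        rw [hidem]
      rw [h1]; rw [show trans (true :: true :: l) = trans (true :: l) from rfl]
      exact ih (by rwa [List.getLast?_cons_cons] at hl) q
  | case5 l ih =>
      intro q
      show run ζ (ζ q true) (trans l) = run δ (δ (δ q true) false) l
      rcases l with _ | ⟨x, l⟩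
      · simp [run, trans, hζ]
      · rw [ih (by rwa [List.getLast?_cons_cons, List.getLast?_cons_cons] at hl)]
        simp [hζ]

theorem idem {Q : Type*} (δ : Q → Bool → Q) (ha : ∃! q₁ : Q, δ q₁ true ≠ q₁) :
    ∀ q, δ (δ q true) true = δ q true := by
  obtain ⟨q₁, h1, hu⟩ := ha
  have hfix : ∀ r, r ≠ q₁ → δ r true = r := by
    intro r hr
    by_contra h
    exact hr (hu r h)
  intro q
  apply hfix
  intro hEq
  by_cases hq : q = q₁
  · exact h1 (hq ▸ hEq)
  · rw [hfix q hq] at hEq; exact hq hEq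

theorem image_card {Q : Type*} [Fintype Q] [DecidableEq Q] (δ : Q → Bool → Q)
    (ha : ∃! q₁ : Q, δ q₁ true ≠ q₁) (hb : Function.Bijective (fun q => δ q false)) :
    ∀ w : List Bool,
      Fintype.card Q ≤ (Finset.univ.image (fun q => run δ q w)).card + w.count true := by
  obtain ⟨q₁, h1, hu⟩ := ha
  have hfix : ∀ r, r ≠ q₁ → δ r true = r := by
    intro r hr; by_contra h; exact hr (hu r h)
  intro w
  induction w using List.reverseRecOn with
  | nil => simp [run, Finset.card_univ]
  | append_singleton w x ih =>
      have himg : (Finset.univ.image (fun q => run δ q (w ++ [x])))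
          = (Finset.univ.image (fun q => run δ q w)).image (fun r => δ r x) := by
        rw [Finset.image_image]
        apply Finset.image_congr
        intro q _
        simp [run, List.foldl_append]
      set S := Finset.univ.image (fun q => run δ q w) with hS
      cases x with
      | false =>
          have : (S.image (fun r => δ r false)).card = S.card :=
            Finset.card_image_of_injective S hb.injective
          simp only [himg, this, List.count_append]
          simpa using ih
      | true =>
          have hsub : S.erase q₁ ⊆ S.image (fun r => δ r true) := by
            intro r hr
            rw [Finset.mem_erase] at hr
            apply Finset.mem_image.2 ⟨r, hr.2, hfix r hr.1⟩
          have h2 : S.card ≤ (S.image (fun r => δ r true)).card + 1 := by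
            have h3 := Finset.card_le_card hsub
            rw [Finset.card_erase_eq_ite] at h3
            split at h3 <;> omega
          simp only [himg, List.count_append]
          norm_num
          have := Finset.card_le_univ S
          omega

end Stmt8Aux

/-- Let `𝒜 = (Q, {a,b}, δ)` (with `a = true`, `b = false`) be a synchronizing
`n`-automaton with reset threshold `t`, in which `a` fixes all states except exactly
one and `b` acts as a permutation of `Q`.  Then the automaton `ℬ = (Q, {b,c}, ζ)`,
where `ζ(q,b) = δ(q,b)` and `ζ(q,c) = δ(q,ab)` (with `c = true`, `b = false`), is
synchronizing with reset threshold at most `t - n + 2` (stated additively). -/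
theorem stmt_8 {Q : Type*} [Fintype Q] (n : ℕ) (hcard : Fintype.card Q = n)
    (δ : Q → Bool → Q) (t : ℕ)
    (hsync : ∃ w : List Bool, w.length = t ∧ ∃ p, ∀ q, run δ q w = p)
    (hmin : ∀ w : List Bool, (∃ p, ∀ q, run δ q w = p) → t ≤ w.length)
    (ha : ∃! q₁ : Q, δ q₁ true ≠ q₁)
    (hb : Function.Bijective (fun q => δ q false)) :
    let ζ : Q → Bool → Q := fun q x => if x then δ (δ q true) false else δ q false
    ∃ w : List Bool, (∃ p, ∀ q, run ζ q w = p) ∧ w.length + n ≤ t + 2 := by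
  intro ζ
  classical
  obtain ⟨w₀, hlen, p, hp⟩ := hsync
  have hidem := Stmt8Aux.idem δ ha
  set l := w₀ ++ [false] with hl
  have hlast : l.getLast? ≠ some true := by
    rw [hl, List.getLast?_concat]
    simp
  have hrun : ∀ q, run ζ q (Stmt8Aux.trans l) = δ p false := by
    intro q
    rw [Stmt8Aux.trans_run δ hidem ζ (fun q x => rfl) l hlast q]
    rw [hl, run, List.foldl_append, show List.foldl δ q w₀ = p from hp q]
    rfl
  refine ⟨Stmt8Aux.trans l, ⟨δ p false, hrun⟩, ?_⟩
  have hL := Stmt8Aux.trans_length l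
  have hC := Stmt8Aux.image_card δ ha hb w₀
  have himg : Finset.univ.image (fun q => run δ q w₀) = {p} := by
    have : Nonempty Q := ⟨p⟩
    rw [show (fun q => run δ q w₀) = fun _ => p from funext hp]
    exact Finset.image_const Finset.univ_nonempty p
  rw [himg, Finset.card_singleton, hcard] at hC
  have hcount : l.count true = w₀.count true := by
    rw [hl, List.count_append]; simp
  have hlenl : l.length = t + 1 := by
    rw [hl, List.length_append]; simp [hlen]
  omega
end

section
/- In the Černý automaton C_n (n ≥ 3), the automaton defined on {1,…,n} by the actions of the words b and c = ab is isomorphic to the automaton 𝒲_n (the unique two-letter coloring of the Wielandt digraph W_n). -/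
/-- The automaton `𝒲_n`, the unique two-letter coloring of the Wielandt digraph:
both letters send `i` to `i+1` for `i < n-1`; the last state goes to `1` under one
letter (`true`) and to `0` under the other (`false`). -/
def wiel (n : ℕ) (q : ZMod n) : Bool → ZMod n
  | true => if q.val = n - 1 then 1 else q + 1
  | false => if q.val = n - 1 then 0 else q + 1

/-- For `n ≥ 3`, the automaton obtained from the Černý automaton `C_n` by taking as
letters the actions of the words `b` and `c = ab` (here `c = true`, `b = false`) is
isomorphic, up to a renaming of the letters, to the automaton `𝒲_n`. -/
theorem stmt_9 (n : ℕ) (hn : 3 ≤ n) :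
    let ζ : ZMod n → Bool → ZMod n := fun q x =>
      if x then cerny n (cerny n q true) false else cerny n q false
    ∃ (φ : ZMod n ≃ ZMod n) (ψ : Bool ≃ Bool),
      ∀ (q : ZMod n) (x : Bool), φ (ζ q x) = wiel n (φ q) (ψ x) := by
  intro ζ
  refine ⟨Equiv.refl _, Equiv.refl _, fun q x => ?_⟩
  haveI : NeZero n := ⟨by omega⟩
  have hq : ((q.val : ℕ) : ZMod n) = q := by simp [ZMod.natCast_val, ZMod.cast_id]
  have key : q.val = n - 1 → q + 1 = 0 := by
    intro h
    rw [← hq, h, ← Nat.cast_add_one, Nat.sub_add_cancel (by omega), ZMod.natCast_self]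
  cases x with
  | true =>
    show (if q.val = n - 1 then (0:ZMod n) else q) + 1 = if q.val = n - 1 then 1 else q + 1
    split <;> simp
  | false =>
    show q + 1 = if q.val = n - 1 then 0 else q + 1
    split
    · exact key ‹_›
    · rfl
end

section
/- For odd n ≥ 5, the digraph V_n (vertices 1,…,n with edges (i,i+1) for 1 ≤ i ≤ n-1, plus (n,1) and (n,3)) is primitive and its exponent equals n² - 3n + 4. -/
/-- The digraph `V_n` on vertices `0,…,n-1` (paper's `1,…,n` shifted by one):
edges `i → i+1` for `i < n-1`, plus `n-1 → 0` and `n-1 → 2`. -/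
def vEdge (n : ℕ) (u v : ZMod n) : Prop :=
  v = u + 1 ∨ (u.val = n - 1 ∧ v = 2)

/-!
`V_n` is the Hamiltonian cycle `i ↦ i + 1` of length `n` plus the chord `n-1 → 2`, which closes
a cycle of length `n - 2` through `2`; for odd `n` the two lengths are coprime.

Upper bound: from `u`, run to `n-1`, take the chord, wind `x` times round the short and `a` times
round the long cycle at `2`, then run to `v`. If `c` is the length of the unwound part, then
`n² - 3n + 4 - c = x (n-2) + a n` is solvable unless `c = n + 2`, and in that case `v = u + 4`
is reached round the long cycle alone.

Lower bound: a walk of length `t` from `u` to `v` that wraps `w` times through `n-1 → 0` and uses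
the chord `b` times satisfies `t + u = v + w n + b (n-2)`, and if `b > 0` the part after the last
chord ends at a vertex `≥ 2` or wraps. For `u = 0`, `v = 1` and `t = n² - 3n + 3` these
conditions have no solution.
-/

section PathLen

variable {V : Type*} {E : V → V → Prop}

theorem PathLen.trans {s t : ℕ} {u w v : V} (h₁ : PathLen E s u w) (h₂ : PathLen E t w v) :
    PathLen E (s + t) u v := by
  induction s generalizing u with
  | zero => rw [zero_add]; exact (h₁ : u = w) ▸ h₂
  | succ s ih =>
    obtain ⟨x, hux, hx⟩ := h₁
    rw [Nat.succ_add]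
    exact ⟨x, hux, ih hx⟩

theorem PathLen.mul_of_loop {ℓ : ℕ} {w : V} (h : PathLen E ℓ w w) (k : ℕ) :
    PathLen E (k * ℓ) w w := by
  induction k with
  | zero => rw [zero_mul]; rfl
  | succ k ih => rw [Nat.succ_mul]; exact ih.trans h

theorem PathLen.forall_of_le (hE : ∀ u, ∃ x, E u x) {s t : ℕ} (hs : ∀ u v, PathLen E s u v)
    (hst : s ≤ t) : ∀ u v, PathLen E t u v := by
  induction hst with
  | refl => exact hs
  | step _ ih =>
    intro u v
    obtain ⟨x, hux⟩ := hE u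
    exact ⟨x, hux, ih x v⟩

end PathLen

theorem ZMod.val_eq_sub_one_iff {n : ℕ} [NeZero n] {u : ZMod n} : u.val = n - 1 ↔ u = -1 := by
  obtain ⟨m, rfl⟩ := Nat.exists_eq_succ_of_ne_zero (NeZero.ne n)
  rw [Nat.succ_sub_one]
  exact (ZMod.val_injective _).eq_iff' (ZMod.val_neg_one m)

theorem ZMod.val_two_of_lt {n : ℕ} (hn : 2 < n) : (2 : ZMod n).val = 2 := by
  rw [ZMod.val_two_eq_two_mod, Nat.mod_eq_of_lt hn]

section VEdge

variable {n : ℕ}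

theorem vEdge_neg_one_two [NeZero n] : vEdge n (-1) 2 :=
  .inr ⟨ZMod.val_eq_sub_one_iff.mpr rfl, rfl⟩

theorem pathLen_vEdge_add_natCast (k : ℕ) (u : ZMod n) : PathLen (vEdge n) k u (u + k) := by
  induction k generalizing u with
  | zero => exact (add_zero u).symm.trans (by rw [Nat.cast_zero])
  | succ k ih =>
    refine ⟨u + 1, .inl rfl, ?_⟩
    rw [Nat.cast_succ, add_comm (k : ZMod n), ← add_assoc]
    exact ih (u + 1)

theorem pathLen_vEdge_self (u : ZMod n) : PathLen (vEdge n) n u u := by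
  simpa using pathLen_vEdge_add_natCast n u

theorem pathLen_vEdge_val_sub [NeZero n] (u v : ZMod n) : PathLen (vEdge n) (v - u).val u v := by
  simpa using pathLen_vEdge_add_natCast (v - u).val u

theorem pathLen_vEdge_to_two [NeZero n] (u : ZMod n) : PathLen (vEdge n) (n - u.val) u 2 := by
  have hu := u.val_lt
  have hto : PathLen (vEdge n) (n - 1 - u.val) u (-1) := by
    convert pathLen_vEdge_add_natCast (n - 1 - u.val) u
    rw [Nat.cast_sub (by omega), Nat.cast_sub (by omega), ZMod.natCast_self, ZMod.natCast_zmod_val]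
    ring
  have := hto.trans (t := 1) ⟨2, vEdge_neg_one_two, rfl⟩
  rwa [show n - 1 - u.val + 1 = n - u.val by omega] at this

theorem pathLen_vEdge_two_two (hn : 2 < n) : PathLen (vEdge n) (n - 2) (2 : ZMod n) 2 := by
  have : NeZero n := ⟨by omega⟩
  simpa only [ZMod.val_two_of_lt hn] using pathLen_vEdge_to_two (2 : ZMod n)

theorem exists_laps_of_pathLen_vEdge (hn : 3 ≤ n) {t : ℕ} {u v : ZMod n}
    (h : PathLen (vEdge n) t u v) :
    ∃ w b : ℕ, t + u.val = v.val + w * n + b * (n - 2) ∧ (b ≠ 0 → 2 ≤ v.val + w * n) := by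
  have : NeZero n := ⟨by omega⟩
  induction t generalizing u with
  | zero => exact ⟨0, 0, by rw [show u = v from h]; simp, fun h => absurd rfl h⟩
  | succ t ih =>
    obtain ⟨x, hux, hx⟩ := h
    obtain ⟨w, b, hlen, hb⟩ := ih hx
    rcases hux with rfl | ⟨hu, rfl⟩
    · by_cases hu : u.val = n - 1
      · rw [ZMod.val_eq_sub_one_iff.mp hu, neg_add_cancel, ZMod.val_zero] at hlen
        refine ⟨w + 1, b, ?_, fun _ => ?_⟩ <;> rw [add_one_mul] <;> omega
      · have hsucc : (u + 1).val = u.val + 1 := by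
          rw [ZMod.val_add_of_lt] <;> rw [ZMod.val_one'' (by omega)]
          have := u.val_lt
          omega
        exact ⟨w, b, by omega, hb⟩
    · rw [ZMod.val_two_of_lt (by omega)] at hlen
      refine ⟨w, b + 1, by rw [add_one_mul]; omega, fun _ => ?_⟩
      rcases Nat.eq_zero_or_pos b with rfl | hb0
      · omega
      · exact hb hb0.ne'

end VEdge

theorem exists_add_mul_sub_two_add_mul_eq {n : ℕ} (hodd : Odd n) (hn : 3 ≤ n) {c : ℕ}
    (hc₁ : 1 ≤ c) (hc₂ : c ≤ 2 * n - 1) (hc : c ≠ n + 2) :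
    ∃ x a : ℕ, c + x * (n - 2) + a * n = n ^ 2 - 3 * n + 4 := by
  obtain ⟨m, rfl⟩ := hodd
  have h3n : 3 * (2 * m + 1) ≤ (2 * m + 1) ^ 2 := by nlinarith
  obtain ⟨j, rfl | rfl⟩ := Nat.even_or_odd' c
  · rcases eq_or_ne j 1 with rfl | hj
    · refine ⟨2 * m, 0, ?_⟩
      zify [h3n, show 2 ≤ 2 * m + 1 by omega]
      ring
    · refine ⟨j - 2, 2 * m - j, ?_⟩
      zify [h3n, show 2 ≤ 2 * m + 1 by omega, show 2 ≤ j by omega, show j ≤ 2 * m by omega]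
      ring
  · rcases le_or_gt j m with hj | hj
    · refine ⟨m - 1 + j, m - j, ?_⟩
      zify [h3n, show 2 ≤ 2 * m + 1 by omega, show 1 ≤ m by omega, hj]
      ring
    · refine ⟨j - m - 2, 3 * m - 1 - j, ?_⟩
      zify [h3n, show 2 ≤ 2 * m + 1 by omega, show m ≤ j by omega, show 2 ≤ j - m by omega,
        show j ≤ 3 * m - 1 by omega, show 1 ≤ 3 * m by omega]
      ring

theorem pathLen_vEdge_exponent {n : ℕ} (hodd : Odd n) (hn : 3 ≤ n) (u v : ZMod n) :
    PathLen (vEdge n) (n ^ 2 - 3 * n + 4) u v := by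
  have : NeZero n := ⟨by omega⟩
  have hu := u.val_lt
  have hv := (v - 2).val_lt
  by_cases hc : n - u.val + (v - 2).val = n + 2
  · have hvu : v = u + 4 := by
      have h := congrArg (Nat.cast : ℕ → ZMod n) (show (v - 2).val = u.val + 2 by omega)
      push_cast [ZMod.natCast_zmod_val] at h
      linear_combination h
    have hT : ((n ^ 2 - 3 * n + 4 : ℕ) : ZMod n) = 4 := by
      have h3n : 3 * n ≤ n ^ 2 := by nlinarith
      rw [show n ^ 2 - 3 * n + 4 = 4 + (n - 3) * n by zify [h3n, show 3 ≤ n by omega]; ring]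
      simp
    rw [hvu, ← hT]
    exact pathLen_vEdge_add_natCast _ u
  · obtain ⟨x, a, hxa⟩ := exists_add_mul_sub_two_add_mul_eq hodd hn (by omega) (by omega) hc
    have hwalk := (((pathLen_vEdge_to_two u).trans ((pathLen_vEdge_two_two hn).mul_of_loop x)).trans
      ((pathLen_vEdge_self 2).mul_of_loop a)).trans (pathLen_vEdge_val_sub 2 v)
    convert hwalk using 1
    omega

theorem not_pathLen_vEdge_zero_one {n : ℕ} (hodd : Odd n) (hn : 3 ≤ n) :
    ¬ PathLen (vEdge n) (n ^ 2 - 3 * n + 3) 0 1 := by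
  intro h01
  obtain ⟨w, b, hlen, hb⟩ := exists_laps_of_pathLen_vEdge hn h01
  rw [ZMod.val_zero, ZMod.val_one'' (by omega)] at hlen
  rw [ZMod.val_one'' (by omega)] at hb
  obtain ⟨m, rfl⟩ := hodd
  zify [show 3 * (2 * m + 1) ≤ (2 * m + 1) ^ 2 by nlinarith, show 2 ≤ 2 * m + 1 by omega] at hlen
  -- `2 (b + 1) = n k`: `k = 1` contradicts parity, while `k ≥ 2` forces `b ≥ n - 1`, and then
  -- `w ≥ 1` overshoots.
  have hk : 2 * ((b : ℤ) + 1) = (2 * m + 1) * (w + b + 2 - 2 * m) := by linear_combination hlen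
  rcases le_or_gt (w + b + 2 - 2 * m : ℤ) 1 with hk_le | hk_gt
  · have hk1 : (w + b + 2 - 2 * m : ℤ) = 1 := by nlinarith
    rw [hk1, mul_one] at hk
    omega
  · have hbm : 2 * (m : ℤ) ≤ b := by nlinarith
    have hw : 1 ≤ w * (2 * m + 1) := by have := hb (by omega); omega
    nlinarith

/-- For odd `n ≥ 5`, the digraph `V_n` is primitive (strongly connected and the gcd
of its directed cycle lengths is 1) and its exponent is exactly `n² - 3n + 4`. -/
theorem stmt_15 (n : ℕ) (hodd : Odd n) (hn : 5 ≤ n) :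
    ((∀ u v : ZMod n, ∃ t, PathLen (vEdge n) t u v) ∧
      (∀ d : ℕ, (∀ (t : ℕ) (v : ZMod n), 0 < t → PathLen (vEdge n) t v v → d ∣ t) →
        d = 1)) ∧
    IsLeast {t : ℕ | ∀ u v : ZMod n, PathLen (vEdge n) t u v} (n ^ 2 - 3 * n + 4) := by
  have : NeZero n := ⟨by omega⟩
  refine ⟨⟨fun u v => ⟨_, pathLen_vEdge_val_sub u v⟩, fun d hd => ?_⟩,
    pathLen_vEdge_exponent hodd (by omega), fun s hs => ?_⟩
  · have hdn : d ∣ n := hd n 0 (by omega) (pathLen_vEdge_self 0)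
    have hdn₂ : d ∣ n - 2 := hd (n - 2) 2 (by omega) (pathLen_vEdge_two_two (by omega))
    have hd₂ : d ∣ 2 := by simpa [Nat.sub_sub_self (by omega : 2 ≤ n)] using Nat.dvd_sub hdn hdn₂
    exact (hodd.coprime_two_right.coprime_dvd_left hdn).eq_one_of_dvd hd₂
  · by_contra! hs_lt
    exact not_pathLen_vEdge_zero_one hodd (by omega)
      (PathLen.forall_of_le (fun u => ⟨u + 1, .inl rfl⟩) hs (by omega) 0 1)
end
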